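/- Let G be a complete group (i.e., G has trivial center and every automorphism of G is inner). Then the quotient group T(G) = NHol(G)/Hol(G) is elementary 2-abelian. -/

import Mathlib

/-!
For complete `G`, `(g, h) ↦ λ(g)ρ(h)` is an isomorphism `G × G ≃* Hol(G)`, and after a left
translation every `π ∈ NHol(G)` fixes `1`, so conjugation by `π` is an automorphism `Φ` of `G × G`
preserving the diagonal `Δ`, the stabiliser of `1`. Write `Φ(σ, 1) = (a σ, b σ)`. For
`x ∈ a(G) ∩ b(G)` and any `g`, both `([g, x], 1)` and `(1, [g, x])` lie in the normal subgroup
`Φ(G × 1)`, whose intersection with `Δ = Φ(Δ)` is trivial; so `x` is central, and likewise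
`a(G)` and `b(G)` commute. In the centreless group `G` this and diagonal preservation force
`Φ(1, τ) = (b τ, a τ)`, so `σ ↦ a σ · b σ` is the restriction of `Φ` to `Δ`, hence inner. Since
`a(G)` and `b(G)` are normal, `b ∘ a = 1 = a ∘ b`, i.e. `Φ²` maps `G × 1` into itself: `π²`
normalises `λ(G)`.
-/

/-- The left regular representation `λ : G →* Perm G`, `λ(σ)(x) = σ·x`. -/
def lambda (G : Type*) [Group G] : G →* Equiv.Perm G where
  toFun σ := Equiv.mulLeft σ
  map_one' := by ext x; simp
  map_mul' σ τ := by ext x; simp [mul_assoc]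

/-- The right regular representation `ρ : G →* Perm G`, `ρ(σ)(x) = x·σ⁻¹`. -/
def rho (G : Type*) [Group G] : G →* Equiv.Perm G where
  toFun σ := Equiv.mulRight σ⁻¹
  map_one' := by ext x; simp
  map_mul' σ τ := by ext x; simp [mul_assoc]

/-- The holomorph `Hol(G)`: the normalizer of `λ(G)` in `Perm G`. -/
def Hol (G : Type*) [Group G] : Subgroup (Equiv.Perm G) :=
  Subgroup.normalizer (((lambda G).range : Subgroup (Equiv.Perm G)) : Set (Equiv.Perm G))

/-- The multiple holomorph `NHol(G)`: the normalizer of `Hol(G)` in `Perm G`. -/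
def NHol (G : Type*) [Group G] : Subgroup (Equiv.Perm G) :=
  Subgroup.normalizer ((Hol G : Subgroup (Equiv.Perm G)) : Set (Equiv.Perm G))

instance holNormalInNHol (G : Type*) [Group G] :
    ((Hol G).subgroupOf (NHol G)).Normal :=
  Subgroup.normal_in_normalizer

/-- `T(G) = NHol(G) / Hol(G)`. -/
def THol (G : Type*) [Group G] : Type _ :=
  NHol G ⧸ (Hol G).subgroupOf (NHol G)

noncomputable instance (G : Type*) [Group G] : Group (THol G) :=
  QuotientGroup.Quotient.group _

open scoped commutatorElement

section Development

variable {G : Type*} [Group G]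

lemma eq_one_of_forall_commute (hZ : Subgroup.center G = ⊥) {z : G}
    (h : ∀ g : G, Commute g z) : z = 1 := by
  rw [← Subgroup.mem_bot, ← hZ, Subgroup.mem_center_iff]
  exact fun g => h g

lemma exists_mulEquiv_conj_of_mem_normalizer {H K : Type*} [Group H] [Group K] {f : H →* K}
    (hf : Function.Injective f) {π : K} (hπ : π ∈ Subgroup.normalizer (f.range : Set K)) :
    ∃ Φ : H ≃* H, ∀ x, f (Φ x) = π * f x * π⁻¹ := by
  let e := MonoidHom.ofInjective hf
  refine ⟨e.trans (((MulAut.conj π).subgroupMap f.range).trans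
    ((MulEquiv.subgroupCongr (Subgroup.mem_normalizer_iff_map_conj_eq.mp hπ)).trans e.symm)),
    fun x => ?_⟩
  simp [e, MulEquiv.subgroupCongr_apply, MulEquiv.coe_subgroupMap_apply,
    MonoidHom.ofInjective_apply]

lemma mul_sq_mem_of_mem_normalizer {K : Type*} [Group K] {H : Subgroup K} {h p : K}
    (hh : h ∈ H) (hp : p ∈ Subgroup.normalizer (H : Set K)) (hp2 : p ^ 2 ∈ H) :
    (h * p) ^ 2 ∈ H := by
  rw [show (h * p) ^ 2 = h * (p * h * p⁻¹) * p ^ 2 by rw [sq, sq]; group]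
  exact mul_mem (mul_mem hh ((Subgroup.mem_normalizer_iff.mp hp h).mp hh)) hp2

def IsCentralProduct (A C : Subgroup G) : Prop :=
  (∀ a ∈ A, ∀ c ∈ C, Commute a c) ∧ ∀ g : G, ∃ a ∈ A, ∃ c ∈ C, a * c = g

namespace IsCentralProduct

variable {A C : Subgroup G}

lemma symm (h : IsCentralProduct A C) : IsCentralProduct C A := by
  refine ⟨fun c hc a ha => (h.1 a ha c hc).symm, fun g => ?_⟩
  obtain ⟨a, ha, c, hc, rfl⟩ := h.2 g
  exact ⟨c, hc, a, ha, (h.1 a ha c hc).symm.eq⟩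

lemma normal (h : IsCentralProduct A C) : A.Normal := by
  refine ⟨fun a ha g => ?_⟩
  obtain ⟨a', ha', c', hc', rfl⟩ := h.2 g
  have hc'a : c' * a * c'⁻¹ = a := by rw [(h.1 a ha c' hc').symm.eq, mul_inv_cancel_right]
  rw [show a' * c' * a * (a' * c')⁻¹ = a' * (c' * a * c'⁻¹) * a'⁻¹ by group, hc'a]
  exact A.mul_mem (A.mul_mem ha' ha) (A.inv_mem ha')

lemma eq_one_of_mem_of_mem (h : IsCentralProduct A C) (hZ : Subgroup.center G = ⊥)
    {x : G} (hxA : x ∈ A) (hxC : x ∈ C) : x = 1 :=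
  eq_one_of_forall_commute hZ fun g => by
    obtain ⟨a, ha, c, hc, rfl⟩ := h.2 g
    exact (h.1 a ha x hxC).mul_left (h.1 x hxA c hc).symm

lemma mem_of_forall_commute (h : IsCentralProduct A C) (hZ : Subgroup.center G = ⊥)
    {x : G} (hx : ∀ a ∈ A, Commute a x) : x ∈ C := by
  obtain ⟨a, ha, c, hc, rfl⟩ := h.2 x
  obtain rfl : a = 1 := eq_one_of_forall_commute hZ fun g => by
    obtain ⟨a', ha', c', hc', rfl⟩ := h.2 g
    refine Commute.mul_left ?_ (h.1 a ha c' hc').symm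
    simpa using (hx a' ha').mul_right (h.1 a' ha' c hc).inv_right
  simpa using hc

lemma eq_of_mul_eq_mul (h : IsCentralProduct A C) (hZ : Subgroup.center G = ⊥)
    {a a' c c' : G} (ha : a ∈ A) (ha' : a' ∈ A) (hc : c ∈ C) (hc' : c' ∈ C)
    (he : a * c = a' * c') : a = a' ∧ c = c' := by
  have hx : a'⁻¹ * a = c' * c⁻¹ := by
    rw [inv_mul_eq_iff_eq_mul, ← mul_assoc, ← he, mul_inv_cancel_right]
  have h1 : a'⁻¹ * a = 1 := h.eq_one_of_mem_of_mem hZ (A.mul_mem (A.inv_mem ha') ha)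
    (hx ▸ C.mul_mem hc' (C.inv_mem hc))
  exact ⟨(inv_mul_eq_one.mp h1).symm, (mul_inv_eq_one.mp (hx ▸ h1)).symm⟩

end IsCentralProduct

section NormalSubgroupOfProd

variable {M : Subgroup (G × G)}

lemma mk_commutatorElement_one_mem [M.Normal] {m : G × G} (hm : m ∈ M) (g : G) :
    (⁅g, m.1⁆, 1) ∈ M := by
  convert M.mul_mem (‹M.Normal›.conj_mem m hm (g, 1)) (M.inv_mem hm) using 1
  ext <;> simp [commutatorElement_def]

lemma one_mk_commutatorElement_mem [M.Normal] {m : G × G} (hm : m ∈ M) (g : G) :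
    (1, ⁅g, m.2⁆) ∈ M := by
  convert M.mul_mem (‹M.Normal›.conj_mem m hm (1, g)) (M.inv_mem hm) using 1
  ext <;> simp [commutatorElement_def]

lemma eq_one_of_mk_one_mem_of_one_mk_mem (hM : ∀ x : G, (x, x) ∈ M → x = 1) {k : G}
    (h₁ : (k, 1) ∈ M) (h₂ : (1, k) ∈ M) : k = 1 :=
  hM k (by simpa using M.mul_mem h₁ h₂)

lemma commute_fst_snd_of_mem [M.Normal] (hM : ∀ x : G, (x, x) ∈ M → x = 1) {m m' : G × G}
    (hm : m ∈ M) (hm' : m' ∈ M) : Commute m.1 m'.2 := by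
  rw [← commutatorElement_eq_one_iff_commute]
  refine eq_one_of_mk_one_mem_of_one_mk_mem hM ?_ (one_mk_commutatorElement_mem hm' m.1)
  simpa [commutatorElement_inv] using M.inv_mem (mk_commutatorElement_one_mem hm m'.2)

lemma fst_eq_one_of_fst_eq_snd [M.Normal] (hZ : Subgroup.center G = ⊥)
    (hM : ∀ x : G, (x, x) ∈ M → x = 1) {m m' : G × G} (hm : m ∈ M) (hm' : m' ∈ M)
    (h : m.1 = m'.2) : m.1 = 1 :=
  eq_one_of_forall_commute hZ fun g => by
    rw [← commutatorElement_eq_one_iff_commute]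
    refine eq_one_of_mk_one_mem_of_one_mk_mem hM (mk_commutatorElement_one_mem hm g) ?_
    simpa [h] using one_mk_commutatorElement_mem hm' g

end NormalSubgroupOfProd

section AutOfProd

variable (Φ : G × G ≃* G × G)

def PreservesDiagonal : Prop := ∀ x : G × G, (Φ x).1 = (Φ x).2 ↔ x.1 = x.2

def fstInl : G →* G := (MonoidHom.fst G G).comp ((Φ : G × G →* G × G).comp (MonoidHom.inl G G))

def sndInl : G →* G := (MonoidHom.snd G G).comp ((Φ : G × G →* G × G).comp (MonoidHom.inl G G))

def fstInr : G →* G := (MonoidHom.fst G G).comp ((Φ : G × G →* G × G).comp (MonoidHom.inr G G))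

def sndInr : G →* G := (MonoidHom.snd G G).comp ((Φ : G × G →* G × G).comp (MonoidHom.inr G G))

@[simp] lemma fstInl_apply (σ : G) : fstInl Φ σ = (Φ (σ, 1)).1 := rfl

@[simp] lemma sndInl_apply (σ : G) : sndInl Φ σ = (Φ (σ, 1)).2 := rfl

@[simp] lemma fstInr_apply (τ : G) : fstInr Φ τ = (Φ (1, τ)).1 := rfl

@[simp] lemma sndInr_apply (τ : G) : sndInr Φ τ = (Φ (1, τ)).2 := rfl

lemma apply_eq_inl_mul_inr (x : G × G) : Φ x = Φ (x.1, 1) * Φ (1, x.2) := by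
  rw [← map_mul, Prod.mk_mul_mk, mul_one, one_mul]

lemma isCentralProduct_range_fstInl_fstInr :
    IsCentralProduct (fstInl Φ).range (fstInr Φ).range := by
  refine ⟨?_, fun g => ?_⟩
  · rintro _ ⟨σ, rfl⟩ _ ⟨τ, rfl⟩
    exact ((MonoidHom.commute_inl_inr σ τ).map Φ).map (MonoidHom.fst G G)
  · refine ⟨_, ⟨(Φ.symm (g, 1)).1, rfl⟩, _, ⟨(Φ.symm (g, 1)).2, rfl⟩, ?_⟩
    simp [← Prod.fst_mul, ← apply_eq_inl_mul_inr]

lemma isCentralProduct_range_sndInl_sndInr :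
    IsCentralProduct (sndInl Φ).range (sndInr Φ).range := by
  refine ⟨?_, fun g => ?_⟩
  · rintro _ ⟨σ, rfl⟩ _ ⟨τ, rfl⟩
    exact ((MonoidHom.commute_inl_inr σ τ).map Φ).map (MonoidHom.snd G G)
  · refine ⟨_, ⟨(Φ.symm (1, g)).1, rfl⟩, _, ⟨(Φ.symm (1, g)).2, rfl⟩, ?_⟩
    simp [← Prod.snd_mul, ← apply_eq_inl_mul_inr]

variable {Φ}

lemma PreservesDiagonal.eq_one_of_diag_mem_map (hΦ : PreservesDiagonal Φ) {N : Subgroup (G × G)}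
    (hN : ∀ x : G, (x, x) ∈ N → x = 1) :
    ∀ x : G, (x, x) ∈ N.map (Φ : G × G →* G × G) → x = 1 := by
  rintro x ⟨⟨y₁, y₂⟩, hy, hyx⟩
  change Φ (y₁, y₂) = (x, x) at hyx
  obtain rfl : y₁ = y₂ := (hΦ _).1 (by rw [hyx])
  obtain rfl : y₁ = 1 := hN y₁ hy
  exact congrArg Prod.fst (hyx.symm.trans (map_one Φ))

lemma PreservesDiagonal.commute_fst_apply_snd_apply (hΦ : PreservesDiagonal Φ)
    {N : Subgroup (G × G)} [N.Normal] (hN : ∀ x : G, (x, x) ∈ N → x = 1) {n n' : G × G}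
    (hn : n ∈ N) (hn' : n' ∈ N) : Commute (Φ n).1 (Φ n').2 :=
  have := Subgroup.Normal.map ‹N.Normal› (Φ : G × G →* G × G) Φ.surjective
  commute_fst_snd_of_mem (hΦ.eq_one_of_diag_mem_map hN) (Subgroup.mem_map_of_mem _ hn)
    (Subgroup.mem_map_of_mem _ hn')

lemma PreservesDiagonal.commute_fstInl_sndInl (hΦ : PreservesDiagonal Φ) (σ τ : G) :
    Commute (fstInl Φ σ) (sndInl Φ τ) :=
  hΦ.commute_fst_apply_snd_apply (N := (⊤ : Subgroup G).prod ⊥)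
    (fun _ hx => (Subgroup.mem_prod.mp hx).2) (Subgroup.mem_prod.mpr ⟨trivial, one_mem _⟩)
    (Subgroup.mem_prod.mpr ⟨trivial, one_mem _⟩)

lemma PreservesDiagonal.commute_fstInr_sndInr (hΦ : PreservesDiagonal Φ) (σ τ : G) :
    Commute (fstInr Φ σ) (sndInr Φ τ) :=
  hΦ.commute_fst_apply_snd_apply (N := (⊥ : Subgroup G).prod ⊤)
    (fun _ hx => (Subgroup.mem_prod.mp hx).1) (Subgroup.mem_prod.mpr ⟨one_mem _, trivial⟩)
    (Subgroup.mem_prod.mpr ⟨one_mem _, trivial⟩)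

lemma PreservesDiagonal.eq_one_of_mem_range_fstInl_of_mem_range_sndInl
    (hΦ : PreservesDiagonal Φ) (hZ : Subgroup.center G = ⊥) {x : G}
    (hxA : x ∈ (fstInl Φ).range) (hxB : x ∈ (sndInl Φ).range) : x = 1 := by
  have := Subgroup.Normal.map (H := (⊤ : Subgroup G).prod ⊥) inferInstance
    (Φ : G × G →* G × G) Φ.surjective
  obtain ⟨σ, rfl⟩ := hxA
  obtain ⟨τ, hτ⟩ := hxB
  have hmem : ∀ σ : G, (σ, (1 : G)) ∈ (⊤ : Subgroup G).prod ⊥ := fun _ =>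
    Subgroup.mem_prod.mpr ⟨trivial, one_mem _⟩
  exact fst_eq_one_of_fst_eq_snd hZ
    (hΦ.eq_one_of_diag_mem_map fun _ hx => (Subgroup.mem_prod.mp hx).2)
    (Subgroup.mem_map_of_mem _ (hmem σ)) (Subgroup.mem_map_of_mem _ (hmem τ)) hτ.symm

lemma PreservesDiagonal.sndInr_eq_fstInl_and_fstInr_eq_sndInl (hΦ : PreservesDiagonal Φ)
    (hZ : Subgroup.center G = ⊥) (σ : G) :
    sndInr Φ σ = fstInl Φ σ ∧ fstInr Φ σ = sndInl Φ σ := by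
  have hAC := isCentralProduct_range_fstInl_fstInr Φ
  have hb : sndInl Φ σ ∈ (fstInr Φ).range := hAC.mem_of_forall_commute hZ <| by
    rintro _ ⟨τ, rfl⟩
    exact hΦ.commute_fstInl_sndInl τ σ
  have hd : sndInr Φ σ ∈ (fstInl Φ).range := hAC.symm.mem_of_forall_commute hZ <| by
    rintro _ ⟨τ, rfl⟩
    exact hΦ.commute_fstInr_sndInr τ σ
  have hdiag : fstInl Φ σ * fstInr Φ σ = sndInr Φ σ * sndInl Φ σ := by
    rw [(hAC.1 _ hd _ hb).eq]
    have h := (hΦ (σ, σ)).2 rfl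
    rwa [apply_eq_inl_mul_inr] at h
  obtain ⟨hd', hb'⟩ := hAC.eq_of_mul_eq_mul hZ ⟨σ, rfl⟩ hd ⟨σ, rfl⟩ hb hdiag
  exact ⟨hd'.symm, hb'⟩

lemma PreservesDiagonal.exists_conj_eq_fst_apply_diag (hΦ : PreservesDiagonal Φ)
    (hinn : Function.Surjective (MulAut.conj : G →* MulAut G)) :
    ∃ k : G, ∀ σ, (Φ (σ, σ)).1 = k * σ * k⁻¹ := by
  let ψ : G →* G := (MonoidHom.fst G G).comp
    ((Φ : G × G →* G × G).comp ((MonoidHom.id G).prod (MonoidHom.id G)))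
  have hψ : Function.Bijective ψ := by
    constructor
    · intro σ τ h
      have h' : Φ (σ, σ) = Φ (τ, τ) :=
        Prod.ext h (((hΦ _).2 rfl).symm.trans (h.trans ((hΦ _).2 rfl)))
      exact congrArg Prod.fst (Φ.injective h')
    · intro g
      obtain ⟨⟨y₁, y₂⟩, hy⟩ := Φ.surjective (g, g)
      obtain rfl : y₁ = y₂ := (hΦ _).1 (by rw [hy])
      exact ⟨y₁, congrArg Prod.fst hy⟩
  obtain ⟨k, hk⟩ := hinn (MulEquiv.ofBijective ψ hψ)
  exact ⟨k, fun σ => congr($hk σ).symm⟩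

lemma PreservesDiagonal.sndInl_fstInl_eq_one_and_fstInl_sndInl_eq_one
    (hΦ : PreservesDiagonal Φ) (hZ : Subgroup.center G = ⊥)
    (hinn : Function.Surjective (MulAut.conj : G →* MulAut G)) (σ : G) :
    sndInl Φ (fstInl Φ σ) = 1 ∧ fstInl Φ (sndInl Φ σ) = 1 := by
  obtain ⟨k, hk⟩ := hΦ.exists_conj_eq_fst_apply_diag hinn
  have hψ (τ : G) : fstInl Φ τ * sndInl Φ τ = k * τ * k⁻¹ := by
    rw [← (hΦ.sndInr_eq_fstInl_and_fstInr_eq_sndInl hZ τ).2, ← hk,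
      apply_eq_inl_mul_inr Φ (τ, τ)]
    rfl
  have hA := (isCentralProduct_range_fstInl_fstInr Φ).normal
  have hB := (isCentralProduct_range_sndInl_sndInr Φ).normal
  constructor
  · refine hΦ.eq_one_of_mem_range_fstInl_of_mem_range_sndInl hZ ?_ ⟨_, rfl⟩
    rw [← inv_mul_cancel_left (fstInl Φ (fstInl Φ σ)) (sndInl Φ (fstInl Φ σ)), hψ]
    exact mul_mem (inv_mem ⟨_, rfl⟩) (hA.conj_mem _ ⟨σ, rfl⟩ k)
  · refine hΦ.eq_one_of_mem_range_fstInl_of_mem_range_sndInl hZ ⟨_, rfl⟩ ?_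
    rw [← mul_inv_cancel_right (fstInl Φ (sndInl Φ σ)) (sndInl Φ (sndInl Φ σ)), hψ]
    exact mul_mem (hB.conj_mem _ ⟨σ, rfl⟩ k) (inv_mem ⟨_, rfl⟩)

theorem PreservesDiagonal.snd_apply_apply_inl_eq_one (hΦ : PreservesDiagonal Φ)
    (hZ : Subgroup.center G = ⊥) (hinn : Function.Surjective (MulAut.conj : G →* MulAut G))
    (σ : G) : (Φ (Φ (σ, 1))).2 = 1 := by
  obtain ⟨hba, hab⟩ := hΦ.sndInl_fstInl_eq_one_and_fstInl_sndInl_eq_one hZ hinn σ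
  rw [apply_eq_inl_mul_inr, Prod.snd_mul]
  change sndInl Φ (fstInl Φ σ) * sndInr Φ (sndInl Φ σ) = 1
  rw [(hΦ.sndInr_eq_fstInl_and_fstInr_eq_sndInl hZ _).1, hba, hab, one_mul]

end AutOfProd

section Holomorph

@[simp] lemma lambda_apply (g x : G) : lambda G g x = g * x := rfl

@[simp] lemma rho_apply (g x : G) : rho G g x = x * g⁻¹ := rfl

def lambdaRho (G : Type*) [Group G] : G × G →* Equiv.Perm G where
  toFun x := lambda G x.1 * rho G x.2
  map_one' := by ext; simp
  map_mul' x y := by ext; simp [mul_assoc]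

@[simp] lemma lambdaRho_apply (x : G × G) (y : G) : lambdaRho G x y = x.1 * y * x.2⁻¹ :=
  (mul_assoc _ _ _).symm

lemma lambdaRho_inl (g : G) : lambdaRho G (g, 1) = lambda G g := by ext; simp

lemma lambdaRho_injective (hZ : Subgroup.center G = ⊥) : Function.Injective (lambdaRho G) := by
  rw [injective_iff_map_eq_one]
  rintro ⟨g, h⟩ hgh
  have hx (x : G) : g * x * h⁻¹ = x := by simpa using congr($hgh x)
  obtain rfl : g = h := by simpa [mul_inv_eq_one] using hx 1
  obtain rfl : g = 1 :=
    eq_one_of_forall_commute hZ fun x => eq_mul_inv_iff_mul_eq.mp (hx x).symm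
  rfl

lemma lambda_range_eq_map : (lambda G).range = ((⊤ : Subgroup G).prod ⊥).map (lambdaRho G) := by
  ext f
  constructor
  · rintro ⟨g, rfl⟩
    exact ⟨(g, 1), Subgroup.mem_prod.mpr ⟨trivial, rfl⟩, lambdaRho_inl g⟩
  · rintro ⟨⟨g, h⟩, hgh, rfl⟩
    obtain rfl : h = 1 := (Subgroup.mem_prod.mp hgh).2
    exact ⟨g, (lambdaRho_inl g).symm⟩

lemma lambdaRho_range_le_hol : (lambdaRho G).range ≤ Hol G := by
  rw [MonoidHom.range_eq_map, Hol, lambda_range_eq_map,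
    ← Subgroup.normalizer_eq_top (H := (⊤ : Subgroup G).prod ⊥)]
  exact Subgroup.le_normalizer_map _

lemma lambda_mem_hol (g : G) : lambda G g ∈ Hol G :=
  lambdaRho_range_le_hol ⟨(g, 1), lambdaRho_inl g⟩

lemma map_mul_of_mem_hol {f : Equiv.Perm G} (hf : f ∈ Hol G) (h1 : f 1 = 1) (x y : G) :
    f (x * y) = f x * f y := by
  obtain ⟨t, ht⟩ : f * lambda G x * f⁻¹ ∈ (lambda G).range :=
    (Subgroup.mem_normalizer_iff.mp hf _).mp ⟨x, rfl⟩
  have hxz (z : G) : f (x * z) = t * f z := by simpa using congr($ht.symm (f z))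
  rw [hxz, ← mul_one x, hxz 1, h1, mul_one]

lemma hol_le_lambdaRho_range (hinn : Function.Surjective (MulAut.conj : G →* MulAut G)) :
    Hol G ≤ (lambdaRho G).range := by
  intro f hf
  set f₀ := lambda G (f 1)⁻¹ * f
  have hf₀ : f₀ ∈ Hol G := mul_mem (lambda_mem_hol _) hf
  obtain ⟨k, hk⟩ := hinn (MulEquiv.mk' f₀ (map_mul_of_mem_hol hf₀ (inv_mul_cancel (f 1))))
  refine ⟨(f 1 * k, k), Equiv.ext fun x => ?_⟩
  have hx : k * x * k⁻¹ = (f 1)⁻¹ * f x := congr($hk x)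
  simp [mul_assoc, hx]

lemma lambdaRho_range_eq_hol (hinn : Function.Surjective (MulAut.conj : G →* MulAut G)) :
    (lambdaRho G).range = Hol G :=
  le_antisymm lambdaRho_range_le_hol (hol_le_lambdaRho_range hinn)

lemma preservesDiagonal_of_lambdaRho_conj {π : Equiv.Perm G} (h1 : π 1 = 1)
    {Φ : G × G ≃* G × G} (hΦ : ∀ x, lambdaRho G (Φ x) = π * lambdaRho G x * π⁻¹) :
    PreservesDiagonal Φ := fun x => by
  have h1' : π.symm 1 = 1 := π.symm_apply_eq.mpr h1.symm
  have h : (Φ x).1 * (Φ x).2⁻¹ = π (x.1 * x.2⁻¹) := by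
    simpa [h1'] using congr($(hΦ x) 1)
  rw [← mul_inv_eq_one, h, π.injective.eq_iff' h1, mul_inv_eq_one]

lemma conj_sq_lambda_mem_range (hZ : Subgroup.center G = ⊥)
    (hinn : Function.Surjective (MulAut.conj : G →* MulAut G)) {π : Equiv.Perm G}
    (hπ : π ∈ NHol G) (h1 : π 1 = 1) (σ : G) :
    π ^ 2 * lambda G σ * (π ^ 2)⁻¹ ∈ (lambda G).range := by
  obtain ⟨Φ, hΦ⟩ := exists_mulEquiv_conj_of_mem_normalizer (lambdaRho_injective hZ)
    (by rw [lambdaRho_range_eq_hol hinn]; exact hπ)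
  have hx : ((Φ (Φ (σ, 1))).1, 1) = Φ (Φ (σ, 1)) := Prod.ext rfl
    ((preservesDiagonal_of_lambdaRho_conj h1 hΦ).snd_apply_apply_inl_eq_one hZ hinn σ).symm
  refine ⟨(Φ (Φ (σ, 1))).1, ?_⟩
  rw [← lambdaRho_inl, hx, hΦ, hΦ, lambdaRho_inl, sq]
  group

lemma sq_mem_hol_of_apply_one (hZ : Subgroup.center G = ⊥)
    (hinn : Function.Surjective (MulAut.conj : G →* MulAut G)) {π : Equiv.Perm G}
    (hπ : π ∈ NHol G) (h1 : π 1 = 1) : π ^ 2 ∈ Hol G := by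
  have h1' : π⁻¹ 1 = 1 := by rw [Equiv.Perm.inv_eq_iff_eq, h1]
  refine Subgroup.mem_normalizer_iff.mpr fun n => ⟨?_, fun hn => ?_⟩
  · rintro ⟨σ, rfl⟩
    exact conj_sq_lambda_mem_range hZ hinn hπ h1 σ
  · obtain ⟨τ, hτ⟩ := hn
    have := conj_sq_lambda_mem_range hZ hinn (inv_mem hπ) h1' τ
    rwa [hτ, inv_pow, inv_inv, ← mul_assoc, ← mul_assoc, inv_mul_cancel, one_mul,
      inv_mul_cancel_right] at this

lemma sq_mem_hol (hZ : Subgroup.center G = ⊥)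
    (hinn : Function.Surjective (MulAut.conj : G →* MulAut G)) {π : Equiv.Perm G}
    (hπ : π ∈ NHol G) : π ^ 2 ∈ Hol G := by
  have hπ₀ : (lambda G (π 1))⁻¹ * π ∈ NHol G :=
    mul_mem (inv_mem (Subgroup.le_normalizer (lambda_mem_hol _))) hπ
  have hπ₀1 : ((lambda G (π 1))⁻¹ * π) 1 = 1 := by simp [Equiv.symm_apply_eq]
  simpa using mul_sq_mem_of_mem_normalizer (lambda_mem_hol (π 1)) hπ₀
    (sq_mem_hol_of_apply_one hZ hinn hπ₀ hπ₀1)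

end Holomorph

end Development

/-- If `G` is a complete group (trivial center and every automorphism is
inner), then `T(G) = NHol(G)/Hol(G)` is elementary `2`-abelian. -/
theorem T_of_complete_is_elementary_two_abelian
    (G : Type*) [Group G]
    (hZ : Subgroup.center G = ⊥)
    (hinn : Function.Surjective (MulAut.conj : G →* MulAut G)) :
    ∀ x : THol G, x ^ 2 = 1 := by
  intro x
  induction x using QuotientGroup.induction_on with
  | H π =>
    show (QuotientGroup.mk (π ^ 2) : NHol G ⧸ (Hol G).subgroupOf (NHol G)) = 1
    rw [QuotientGroup.eq_one_iff, Subgroup.mem_subgroupOf, Subgroup.coe_pow]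
    exact sq_mem_hol hZ hinn π.2
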